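/- arXiv:1910.09383 — 7 statements merged into one kernel-verified Lean document; each statement's English description precedes it below -/
import Mathlib

section
/- Let K_ij, K_ik ∈ (0,1] and K_jk ∈ (0,1) be real numbers (kernel similarities among three distinct nodes i, j, k), and let θ_ij, θ_ik ∈ ℝ satisfy the stationarity system θ_ij + K_jk·θ_ik = K_ij and K_jk·θ_ij + θ_ik = K_ik. Then θ_ij > 0 and θ_ik > 0 if and only if K_jk < K_ij/K_ik < 1/K_jk (Kernel Ratio Interval theorem). -/
/-- **Kernel Ratio Interval theorem** (three-node NNK): given kernel values
`Kij, Kik ∈ (0,1]`, `Kjk ∈ (0,1)` and weights solving the stationarity system,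
both weights are positive iff `Kjk < Kij/Kik < 1/Kjk`. -/
theorem kernel_ratio_interval
    (Kij Kik Kjk θij θik : ℝ)
    (hKij₀ : 0 < Kij) (hKij₁ : Kij ≤ 1)
    (hKik₀ : 0 < Kik) (hKik₁ : Kik ≤ 1)
    (hKjk₀ : 0 < Kjk) (hKjk₁ : Kjk < 1)
    (h₁ : θij + Kjk * θik = Kij)
    (h₂ : Kjk * θij + θik = Kik) :
    (0 < θij ∧ 0 < θik) ↔ (Kjk < Kij / Kik ∧ Kij / Kik < 1 / Kjk) := by
  have hd : 0 < 1 - Kjk ^ 2 := by nlinarith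
  have e1 : θij * (1 - Kjk ^ 2) = Kij - Kjk * Kik := by linear_combination h₁ - Kjk * h₂
  have e2 : θik * (1 - Kjk ^ 2) = Kik - Kjk * Kij := by linear_combination h₂ - Kjk * h₁
  rw [lt_div_iff₀ hKik₀, div_lt_div_iff₀ hKik₀ hKjk₀]
  constructor
  · rintro ⟨a, b⟩
    constructor <;> nlinarith
  · rintro ⟨a, b⟩
    constructor <;> nlinarith
end

section
/- Let K_ij, K_ik ∈ (0,1] and K_jk ∈ (0,1) be real numbers, and let θ_ij, θ_ik ∈ ℝ satisfy θ_ij + K_jk·θ_ik = K_ij and K_jk·θ_ij + θ_ik = K_ik. Then θ_ij > 0 if and only if K_jk < K_ij/K_ik. -/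
/-- Lower Kernel Ratio Interval condition (three-node NNK): the weight `θij`
is positive iff `Kjk < Kij / Kik`. -/
theorem kernel_ratio_interval_lower
    (Kij Kik Kjk θij θik : ℝ)
    (hKij₀ : 0 < Kij) (hKij₁ : Kij ≤ 1)
    (hKik₀ : 0 < Kik) (hKik₁ : Kik ≤ 1)
    (hKjk₀ : 0 < Kjk) (hKjk₁ : Kjk < 1)
    (h₁ : θij + Kjk * θik = Kij)
    (h₂ : Kjk * θij + θik = Kik) :
    0 < θij ↔ Kjk < Kij / Kik := by
  have hden : 0 < 1 - Kjk ^ 2 := by nlinarith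
  have key : θij * (1 - Kjk ^ 2) = Kij - Kjk * Kik := by nlinarith
  rw [lt_div_iff₀ hKik₀]
  constructor
  · intro h; nlinarith
  · intro h; nlinarith
end

section
/- Let K_ij, K_ik ∈ (0,1] and K_jk ∈ (0,1) be real numbers, and let θ_ij, θ_ik ∈ ℝ satisfy θ_ij + K_jk·θ_ik = K_ij and K_jk·θ_ij + θ_ik = K_ik. Then θ_ik > 0 if and only if K_ij/K_ik < 1/K_jk. -/
/-- Upper Kernel Ratio Interval condition (three-node NNK): the weight `θik`
is positive iff `Kij / Kik < 1 / Kjk`. -/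
theorem kernel_ratio_interval_upper
    (Kij Kik Kjk θij θik : ℝ)
    (hKij₀ : 0 < Kij) (hKij₁ : Kij ≤ 1)
    (hKik₀ : 0 < Kik) (hKik₁ : Kik ≤ 1)
    (hKjk₀ : 0 < Kjk) (hKjk₁ : Kjk < 1)
    (h₁ : θij + Kjk * θik = Kij)
    (h₂ : Kjk * θij + θik = Kik) :
    0 < θik ↔ Kij / Kik < 1 / Kjk := by
  have hden : 0 < 1 - Kjk ^ 2 := by nlinarith
  have hθ : θik * (1 - Kjk ^ 2) = Kik - Kjk * Kij := by nlinarith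
  rw [div_lt_div_iff₀ hKik₀ hKjk₀]
  constructor
  · intro h; nlinarith
  · intro h; nlinarith
end

section
/- Let σ² > 0 and let x_i, x_j, x_k be points in a real inner product space with x_j ≠ x_i. For the Gaussian kernel K_{a,b} = exp(−‖x_a − x_b‖²/(2σ²)), the inequality K_{i,j}·K_{j,k} < K_{i,k} holds if and only if ⟨x_k − x_i, x_j − x_i⟩ < ‖x_j − x_i‖². Equivalently, the upper Kernel Ratio Interval condition K_{i,j}/K_{i,k} < 1/K_{j,k} holds if and only if the projection of x_k − x_i onto the direction x_j − x_i is strictly shorter than ‖x_j − x_i‖. -/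
open RealInnerProductSpace

/- Taking logarithms, `K_{i,j} K_{j,k} < K_{i,k}` says that `‖x_k − x_i‖²` is less than
`‖x_j − x_i‖² + ‖x_k − x_j‖²`, and by the law of cosines at `x_i` this is the projection
inequality `⟪x_k − x_i, x_j − x_i⟫ < ‖x_j − x_i‖²`. -/

theorem Real.exp_neg_div_mul_exp_neg_div_lt_iff {c : ℝ} (hc : 0 < c) (a b d : ℝ) :
    Real.exp (-a / c) * Real.exp (-b / c) < Real.exp (-d / c) ↔ d < a + b := by
  rw [← Real.exp_add, Real.exp_lt_exp, ← add_div, div_lt_div_iff_of_pos_right hc]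
  constructor <;> intro h <;> linarith

theorem norm_sq_lt_add_norm_sub_sq_iff_inner_lt {E : Type*} [NormedAddCommGroup E]
    [InnerProductSpace ℝ E] (u v : E) :
    ‖u‖ ^ 2 < ‖v‖ ^ 2 + ‖u - v‖ ^ 2 ↔ ⟪u, v⟫ < ‖v‖ ^ 2 := by
  rw [norm_sub_sq_real]
  constructor <;> intro h <;> linarith

theorem norm_sub_sq_lt_add_norm_sub_sq_iff_inner_lt {E : Type*} [NormedAddCommGroup E]
    [InnerProductSpace ℝ E] (x y z : E) :
    ‖z - x‖ ^ 2 < ‖y - x‖ ^ 2 + ‖z - y‖ ^ 2 ↔ ⟪z - x, y - x⟫ < ‖y - x‖ ^ 2 := by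
  rw [← norm_sq_lt_add_norm_sub_sq_iff_inner_lt, sub_sub_sub_cancel_right]

theorem gaussian_kernel_upper_KRI_iff_projection_general
    {E : Type*} [NormedAddCommGroup E] [InnerProductSpace ℝ E]
    (σsq : ℝ) (hσ : 0 < σsq) (xi xj xk : E)
    (K : E → E → ℝ) (hK : ∀ x y, K x y = Real.exp (-‖x - y‖ ^ 2 / (2 * σsq))) :
    (K xi xj * K xj xk < K xi xk ↔ ⟪xk - xi, xj - xi⟫ < ‖xj - xi‖ ^ 2) ∧
    (K xi xj / K xi xk < 1 / K xj xk ↔ ⟪xk - xi, xj - xi⟫ < ‖xj - xi‖ ^ 2) := by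
  have hK_pos : ∀ x y, 0 < K x y := fun x y => hK x y ▸ Real.exp_pos _
  have hprod : K xi xj * K xj xk < K xi xk ↔ ⟪xk - xi, xj - xi⟫ < ‖xj - xi‖ ^ 2 := by
    rw [hK, hK, hK, Real.exp_neg_div_mul_exp_neg_div_lt_iff (by positivity), norm_sub_rev xi xj,
      norm_sub_rev xj xk, norm_sub_rev xi xk, norm_sub_sq_lt_add_norm_sub_sq_iff_inner_lt]
  refine ⟨hprod, ?_⟩
  rw [div_lt_div_iff₀ (hK_pos xi xk) (hK_pos xj xk), one_mul, hprod]

/-- For the Gaussian kernel `K x y = exp (−‖x−y‖²/(2σ²))` with `x_j ≠ x_i`,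
the inequality `K_{i,j}·K_{j,k} < K_{i,k}` (equivalently, the upper Kernel
Ratio Interval condition `K_{i,j}/K_{i,k} < 1/K_{j,k}`) holds iff the
projection of `x_k − x_i` onto the direction `x_j − x_i` is strictly shorter
than `‖x_j − x_i‖`, i.e. `⟪x_k − x_i, x_j − x_i⟫ < ‖x_j − x_i‖²`. -/
theorem gaussian_kernel_upper_KRI_iff_projection
    {E : Type*} [NormedAddCommGroup E] [InnerProductSpace ℝ E]
    (σsq : ℝ) (hσ : 0 < σsq) (xi xj xk : E) (hji : xj ≠ xi)
    (K : E → E → ℝ) (hK : ∀ x y, K x y = Real.exp (-‖x - y‖ ^ 2 / (2 * σsq))) :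
    (K xi xj * K xj xk < K xi xk ↔ ⟪xk - xi, xj - xi⟫ < ‖xj - xi‖ ^ 2) ∧
    (K xi xj / K xi xk < 1 / K xj xk ↔ ⟪xk - xi, xj - xi⟫ < ‖xj - xi‖ ^ 2) :=
  gaussian_kernel_upper_KRI_iff_projection_general σsq hσ xi xj xk K hK
end

section
/- Let σ² > 0 and let x_i, x_j, x_k be points in a real inner product space with x_j ≠ x_k and ‖x_i − x_j‖ ≤ ‖x_i − x_k‖. For the Gaussian kernel K_{a,b} = exp(−‖x_a − x_b‖²/(2σ²)), it holds that K_{j,k} < K_{i,j}/K_{i,k}; i.e., the lower Kernel Ratio Interval condition for the edge from i to j is satisfied. -/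
/-- Lower Kernel Ratio Interval condition for the Gaussian kernel: if
`x_j ≠ x_k` and `‖x_i − x_j‖ ≤ ‖x_i − x_k‖`, then `K_{j,k} < K_{i,j}/K_{i,k}`
for the Gaussian kernel `K x y = exp (−‖x−y‖²/(2σ²))`. -/
theorem gaussian_kernel_lower_KRI
    {E : Type*} [NormedAddCommGroup E] [InnerProductSpace ℝ E]
    (σsq : ℝ) (hσ : 0 < σsq) (xi xj xk : E) (hjk : xj ≠ xk)
    (hord : ‖xi - xj‖ ≤ ‖xi - xk‖)
    (K : E → E → ℝ) (hK : ∀ x y, K x y = Real.exp (-‖x - y‖ ^ 2 / (2 * σsq))) :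
    K xj xk < K xi xj / K xi xk := by
  rw [hK, hK, hK, ← Real.exp_sub, Real.exp_lt_exp]
  have ha : 0 < ‖xj - xk‖ := norm_sub_pos_iff.mpr hjk
  have hb : ‖xi - xj‖ ^ 2 ≤ ‖xi - xk‖ ^ 2 :=
    pow_le_pow_left₀ (norm_nonneg _) hord 2
  have h2 : 0 < 2 * σsq := by linarith
  rw [div_sub_div_same, div_lt_div_iff₀ h2 h2]
  nlinarith [sq_nonneg ‖xj - xk‖, mul_pos (mul_pos ha ha) h2]
end

section
/- Plane property of NNK graphs: let σ² > 0 and let x_i, x_j, x_k be points in a real inner product space with x_j ≠ x_i, x_j ≠ x_k, and suppose ⟨x_k − x_i, x_j − x_i⟩ > ‖x_j − x_i‖² (x_k lies strictly beyond the hyperplane through x_j with normal x_j − x_i). Then for the Gaussian kernel K_{a,b} = exp(−‖x_a − x_b‖²/(2σ²)), the minimizer (θ_ij, θ_ik) of ½θᵀ[[1, K_{j,k}],[K_{j,k}, 1]]θ − (K_{i,j}, K_{i,k})ᵀθ over θ ≥ 0 satisfies θ_ik = 0 and θ_ij = K_{i,j} > 0. -/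
/-!
Write `a = K_{i,j}`, `b = K_{i,k}`, `c = K_{j,k}`. Moving the weight `s` of `x_k` onto `x_j` as
`(t, s) ↦ (t + c s, 0)` lowers the objective by `s² (1 - c²) / 2 + s (a c - b)`. Here `c < 1`, and
`b < a c`: the plane condition makes the angle at `x_j` obtuse, so
`‖x_i - x_k‖² > ‖x_i - x_j‖² + ‖x_j - x_k‖²`, and the Gaussian kernel turns sums of squared
distances into products. Hence a minimizer has `s = 0`, and then `t = a` minimizes `t² / 2 - a t`.
-/

open RealInnerProductSpace

theorem norm_sub_sq_add_norm_sub_sq_lt_of_lt_inner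
    {E : Type*} [NormedAddCommGroup E] [InnerProductSpace ℝ E] {xi xj xk : E}
    (h : ‖xj - xi‖ ^ 2 < ⟪xk - xi, xj - xi⟫) :
    ‖xi - xj‖ ^ 2 + ‖xj - xk‖ ^ 2 < ‖xi - xk‖ ^ 2 := by
  have hobtuse : ⟪xi - xj, xj - xk⟫ = ⟪xk - xi, xj - xi⟫ - ‖xj - xi‖ ^ 2 := by
    rw [← real_inner_self_eq_norm_sq, ← inner_sub_left, ← inner_neg_neg, real_inner_comm]
    congr 1 <;> abel
  rw [show xi - xk = (xi - xj) + (xj - xk) by abel, norm_add_sq_real]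
  linarith

section GaussianKernel

variable {E : Type*} [NormedAddCommGroup E]

noncomputable def gaussianKernel (σsq : ℝ) (x y : E) : ℝ :=
  Real.exp (-‖x - y‖ ^ 2 / (2 * σsq))

theorem gaussianKernel_pos (σsq : ℝ) (x y : E) : 0 < gaussianKernel σsq x y :=
  Real.exp_pos _

theorem gaussianKernel_lt_one {σsq : ℝ} (hσ : 0 < σsq) {x y : E} (hxy : x ≠ y) :
    gaussianKernel σsq x y < 1 := by
  have hdist : 0 < ‖x - y‖ ^ 2 := by positivity [sub_ne_zero.mpr hxy]
  rw [gaussianKernel, Real.exp_lt_one_iff]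
  exact div_neg_of_neg_of_pos (neg_neg_of_pos hdist) (by positivity)

theorem gaussianKernel_lt_mul_of_sq_add_sq_lt {σsq : ℝ} (hσ : 0 < σsq) {x y z : E}
    (h : ‖x - y‖ ^ 2 + ‖y - z‖ ^ 2 < ‖x - z‖ ^ 2) :
    gaussianKernel σsq x z < gaussianKernel σsq x y * gaussianKernel σsq y z := by
  rw [gaussianKernel, gaussianKernel, gaussianKernel, ← Real.exp_add, Real.exp_lt_exp,
    ← add_div, div_lt_div_iff_of_pos_right (by positivity)]
  linarith

end GaussianKernel

section NNKObjective

/-- The three-node NNK objective `½θᵀ[[1, c], [c, 1]]θ - (a, b)ᵀθ` at `θ = (t, s)`. -/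
noncomputable def nnkObjective (c a b t s : ℝ) : ℝ :=
  (1 / 2) * (t ^ 2 + 2 * c * t * s + s ^ 2) - (a * t + b * s)

variable {c a b t s : ℝ}

theorem nnkObjective_sub_nnkObjective_shift :
    nnkObjective c a b t s - nnkObjective c a b (t + c * s) 0 =
      s ^ 2 * (1 - c ^ 2) / 2 + s * (a * c - b) := by
  unfold nnkObjective; ring

theorem nnkObjective_sub_nnkObjective_of_eq_zero :
    nnkObjective c a b t 0 - nnkObjective c a b a 0 = (t - a) ^ 2 / 2 := by
  unfold nnkObjective; ring

theorem eq_zero_of_isMinOn_nnkObjective (hc₀ : 0 ≤ c) (hc₁ : c < 1) (hb : b < a * c)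
    (ht : 0 ≤ t) (hs : 0 ≤ s)
    (hmin : IsMinOn (fun p : ℝ × ℝ => nnkObjective c a b p.1 p.2) (Set.Ici 0) (t, s)) :
    s = 0 := by
  by_contra hs₀
  have hs_pos : 0 < s := hs.lt_of_ne' hs₀
  have hle : nnkObjective c a b t s ≤ nnkObjective c a b (t + c * s) 0 :=
    hmin (show (0 : ℝ × ℝ) ≤ (t + c * s, 0) from ⟨by positivity, le_rfl⟩)
  have hdrop : 0 < s ^ 2 * (1 - c ^ 2) / 2 + s * (a * c - b) := by
    have : 0 < 1 - c ^ 2 := by nlinarith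
    have : 0 < a * c - b := by linarith
    positivity
  linarith [nnkObjective_sub_nnkObjective_shift (c := c) (a := a) (b := b) (t := t) (s := s)]

theorem eq_of_isMinOn_nnkObjective (ha : 0 ≤ a)
    (hmin : IsMinOn (fun p : ℝ × ℝ => nnkObjective c a b p.1 p.2) (Set.Ici 0) (t, 0)) :
    t = a := by
  have hle : nnkObjective c a b t 0 ≤ nnkObjective c a b a 0 :=
    hmin (show (0 : ℝ × ℝ) ≤ (a, 0) from ⟨ha, le_rfl⟩)
  have : (t - a) ^ 2 / 2 ≤ 0 := by
    linarith [nnkObjective_sub_nnkObjective_of_eq_zero (c := c) (a := a) (b := b) (t := t)]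
  nlinarith [sq_nonneg (t - a)]

end NNKObjective

theorem nnk_plane_property_general
    {E : Type*} [NormedAddCommGroup E] [InnerProductSpace ℝ E]
    (σsq : ℝ) (hσ : 0 < σsq) (xi xj xk : E)
    (hjk : xj ≠ xk)
    (hbeyond : ‖xj - xi‖ ^ 2 < ⟪xk - xi, xj - xi⟫)
    (K : E → E → ℝ) (hK : ∀ x y, K x y = Real.exp (-‖x - y‖ ^ 2 / (2 * σsq)))
    (θij θik : ℝ) (hθij : 0 ≤ θij) (hθik : 0 ≤ θik)
    (hmin : ∀ a b : ℝ, 0 ≤ a → 0 ≤ b →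
      (1 / 2) * (θij ^ 2 + 2 * K xj xk * θij * θik + θik ^ 2)
          - (K xi xj * θij + K xi xk * θik) ≤
        (1 / 2) * (a ^ 2 + 2 * K xj xk * a * b + b ^ 2)
          - (K xi xj * a + K xi xk * b)) :
    θik = 0 ∧ θij = K xi xj ∧ 0 < K xi xj := by
  obtain rfl : K = gaussianKernel σsq := funext fun x => funext (hK x)
  have hmin' : IsMinOn (fun p : ℝ × ℝ => nnkObjective (gaussianKernel σsq xj xk)
      (gaussianKernel σsq xi xj) (gaussianKernel σsq xi xk) p.1 p.2) (Set.Ici 0) (θij, θik) :=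
    fun p hp => hmin p.1 p.2 hp.1 hp.2
  have hθik₀ : θik = 0 :=
    eq_zero_of_isMinOn_nnkObjective (gaussianKernel_pos σsq xj xk).le
      (gaussianKernel_lt_one hσ hjk)
      (gaussianKernel_lt_mul_of_sq_add_sq_lt hσ
        (norm_sub_sq_add_norm_sub_sq_lt_of_lt_inner hbeyond))
      hθij hθik hmin'
  subst hθik₀
  exact ⟨rfl, eq_of_isMinOn_nnkObjective (gaussianKernel_pos σsq xi xj).le hmin',
    gaussianKernel_pos σsq xi xj⟩

/-- **Plane property of NNK graphs.** If `x_k` lies strictly beyond the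
hyperplane through `x_j` with normal `x_j − x_i`, i.e.
`⟪x_k − x_i, x_j − x_i⟫ > ‖x_j − x_i‖²`, then with the Gaussian kernel the
minimizer `(θij, θik)` of the three-node NNK objective
`½θᵀ[[1,K_{j,k}],[K_{j,k},1]]θ − (K_{i,j}, K_{i,k})ᵀθ` over `θ ≥ 0` satisfies
`θik = 0` and `θij = K_{i,j} > 0`. -/
theorem nnk_plane_property
    {E : Type*} [NormedAddCommGroup E] [InnerProductSpace ℝ E]
    (σsq : ℝ) (hσ : 0 < σsq) (xi xj xk : E)
    (hji : xj ≠ xi) (hjk : xj ≠ xk)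
    (hbeyond : ‖xj - xi‖ ^ 2 < ⟪xk - xi, xj - xi⟫)
    (K : E → E → ℝ) (hK : ∀ x y, K x y = Real.exp (-‖x - y‖ ^ 2 / (2 * σsq)))
    (θij θik : ℝ) (hθij : 0 ≤ θij) (hθik : 0 ≤ θik)
    (hmin : ∀ a b : ℝ, 0 ≤ a → 0 ≤ b →
      (1 / 2) * (θij ^ 2 + 2 * K xj xk * θij * θik + θik ^ 2)
          - (K xi xj * θij + K xi xk * θik) ≤
        (1 / 2) * (a ^ 2 + 2 * K xj xk * a * b + b ^ 2)
          - (K xi xj * a + K xi xk * b)) :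
    θik = 0 ∧ θij = K xi xj ∧ 0 < K xi xj :=
  nnk_plane_property_general σsq hσ xi xj xk hjk hbeyond K hK θij θik hθij hθik hmin
end

section
/- Let φ_i be a vector in a real inner product space and {φ_j}_{j∈S} a finite family of vectors. If θ* ≥ 0 minimizes θ ↦ ‖φ_i − Σ_{j∈S} θ_j φ_j‖² over the nonnegative orthant {θ ∈ ℝ^S : θ ≥ 0}, then the residual r = φ_i − Σ_{j∈S} θ*_j φ_j is orthogonal to the approximation: ⟨r, Σ_{j∈S} θ*_j φ_j⟩ = 0. -/
open RealInnerProductSpace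

/-- If `θ* ≥ 0` minimizes `‖φ_i − Σ_j θ_j φ_j‖²` over the nonnegative
orthant, then the residual `r = φ_i − Σ_j θ*_j φ_j` is orthogonal to the
optimal approximation `Σ_j θ*_j φ_j`. -/
theorem nnk_residual_orthogonal_to_approximation
    {E : Type*} [NormedAddCommGroup E] [InnerProductSpace ℝ E]
    {S : Type*} [Fintype S]
    (φi : E) (φ : S → E) (θ : S → ℝ) (hθ : ∀ j, 0 ≤ θ j)
    (hmin : ∀ θ' : S → ℝ, (∀ j, 0 ≤ θ' j) →
      ‖φi - ∑ j, θ j • φ j‖ ^ 2 ≤ ‖φi - ∑ j, θ' j • φ j‖ ^ 2) :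
    ⟪φi - ∑ j, θ j • φ j, ∑ j, θ j • φ j⟫ = 0 := by
  set v := ∑ j, θ j • φ j with hv
  set r := φi - v with hr
  set a := ⟪r, v⟫ with ha
  set b := ‖v‖ ^ 2 with hb
  have key : ∀ s : ℝ, s ≤ 1 → 0 ≤ 2 * s * a + s ^ 2 * b := by
    intro s hs
    have ht : ∀ j, 0 ≤ (1 - s) * θ j := fun j => mul_nonneg (by linarith) (hθ j)
    have h := hmin (fun j => (1 - s) * θ j) ht
    have hsum : ∑ j, ((1 - s) * θ j) • φ j = (1 - s) • v := by
      rw [hv, Finset.smul_sum]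
      exact Finset.sum_congr rfl fun j _ => (smul_smul _ _ _).symm
    rw [hsum] at h
    have hre : φi - (1 - s) • v = r + s • v := by
      rw [hr, sub_smul, one_smul]; abel
    rw [hre] at h
    have hexp : ‖r + s • v‖ ^ 2 = ‖r‖ ^ 2 + 2 * s * a + s ^ 2 * b := by
      rw [hb, ha, ← real_inner_self_eq_norm_sq, ← real_inner_self_eq_norm_sq,
        ← real_inner_self_eq_norm_sq]
      simp only [inner_add_add_self, real_inner_smul_left, real_inner_smul_right]
      rw [real_inner_comm v r]; ring
    have hr1 : ‖φi - v‖ ^ 2 = ‖r‖ ^ 2 := by rw [hr]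
    rw [hr1, hexp] at h
    linarith
  have h1 : 0 ≤ 2 * a + b := by have := key 1 le_rfl; linarith
  by_cases hb0 : b = 0
  · have hv0 : v = 0 := by
      rw [hb] at hb0
      exact norm_eq_zero.mp (pow_eq_zero_iff two_ne_zero |>.mp hb0)
    rw [ha, hv0, inner_zero_right]
  · have hbpos : 0 < b := lt_of_le_of_ne (by positivity) (Ne.symm hb0)
    have hs1 : -a / b ≤ 1 := by
      rw [div_le_one hbpos]; linarith
    have h2 := key (-a / b) hs1
    have h3 : 2 * (-a / b) * a + (-a / b) ^ 2 * b = -(a ^ 2) / b := by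
      field_simp; ring
    rw [h3] at h2
    rcases div_nonneg_iff.mp h2 with ⟨h4, _⟩ | ⟨_, h5⟩
    · have ha2 : a ^ 2 = 0 := le_antisymm (by linarith) (sq_nonneg a)
      exact pow_eq_zero_iff two_ne_zero |>.mp ha2
    · linarith
end
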